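/- arXiv:2403.11248 — 2 statements merged into one kernel-verified Lean document; each statement's English description precedes it below -/
import Mathlib

section
/- Suppose g has a proper evenly convex minorant, the primal problem inf_{x ∈ A} { f(x) − g(x) } with A = {x : h_t(x) ≤ 0, t ∈ T} is solvable, and there exists a solution x0 at which g(x0) = (econv g)(x0). Then weak duality holds between the primal and the conjugate-form Lagrange dual: inf_{x ∈ A} { f(x) − g(x) } ≥ sup_{λ ∈ ℝ^{(T)}_+} inf_{(u*,v*,γ) ∈ W} { g^c(u*,v*,γ) − (f + λh)^c(u*,v*,γ) }. -/
open scoped Classical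

noncomputable section

variable {X : Type*} [AddCommGroup X] [Module ℝ X] [TopologicalSpace X]

/-- The coupling function `c`. -/
def cpl (x : X) (w : (X →L[ℝ] ℝ) × (X →L[ℝ] ℝ) × ℝ) : EReal :=
  if (w.2.1 x : ℝ) < w.2.2 then ((w.1 x : ℝ) : EReal) else ⊤

/-- The c-conjugate of `f`. -/
def cConj (f : X → EReal) (w : (X →L[ℝ] ℝ) × (X →L[ℝ] ℝ) × ℝ) : EReal :=
  ⨆ x : X, cpl x w - f x

/-- The c-biconjugate `f^{cc'}`; it is the e-convex hull `econv f` whenever `f`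
has a proper e-convex minorant. -/
def cBiconj (f : X → EReal) (x : X) : EReal :=
  ⨆ w : (X →L[ℝ] ℝ) × (X →L[ℝ] ℝ) × ℝ, cpl x w - cConj f w

/-- DC difference with the convention `f - g = +∞` outside `dom f`. -/
def dcSub (f g : X → EReal) (x : X) : EReal :=
  if f x = ⊤ then ⊤ else f x - g x

/-- The Lagrangian sum `λh = Σ_t λ_t h_t`. -/
def lagSum {T : Type*} (lam : T →₀ ℝ) (h : T → X → EReal) (x : X) : EReal :=
  ∑ t ∈ lam.support, ((lam t : ℝ) : EReal) * h t x

/-- Key pointwise inequality for EReal arithmetic. -/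
lemma key_ineq (F : ℝ) (C G : EReal) :
    G - (C - (F : EReal)) ≤ (F : EReal) - (C - G) := by
  induction C using EReal.rec with
  | top => simp [sub_eq_add_neg]
  | bot =>
    induction G using EReal.rec <;> simp [sub_eq_add_neg]
  | coe c =>
    induction G using EReal.rec with
    | bot => simp [sub_eq_add_neg]
    | top => simp [sub_eq_add_neg]
    | coe r =>
      rw [show ((c:EReal) - (F:EReal)) = ((c - F : ℝ) : EReal) by norm_cast,
        show ((c:EReal) - (r:EReal)) = ((c - r : ℝ) : EReal) by norm_cast,
        show ((r:EReal) - ((c - F : ℝ) : EReal)) = ((r - (c - F) : ℝ) : EReal) by norm_cast,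
        show ((F:EReal) - ((c - r : ℝ) : EReal)) = ((F - (c - r) : ℝ) : EReal) by norm_cast]
      exact EReal.coe_le_coe_iff.2 (by linarith)

/-- Adding a real number on the left is sub-distributive over infima. -/
lemma helperA {ι : Type*} [Nonempty ι] (r : ℝ) (b : ι → EReal) :
    (⨅ i, ((r : EReal) + b i)) ≤ (r : EReal) + ⨅ i, b i := by
  set x := ⨅ i, ((r : EReal) + b i) with hx
  have h1 : x - (r : EReal) ≤ ⨅ i, b i := by
    refine le_iInf fun i => ?_
    calc x - (r:EReal) ≤ ((r:EReal) + b i) - r := by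
          exact add_le_add (iInf_le _ i) le_rfl
      _ = b i := by rw [add_comm, EReal.add_sub_cancel_right]
  have := (EReal.sub_le_iff_le_add (b := (r:EReal)) (c := ⨅ i, b i)
    (Or.inl (EReal.coe_ne_bot r)) (Or.inl (EReal.coe_ne_top r))).1 h1
  rwa [add_comm] at this

lemma helperB {ι : Type*} (a : ι → EReal) : (⨅ i, -(a i)) ≤ -(⨆ i, a i) :=
  EReal.le_neg_of_le_neg (iSup_le fun i => EReal.le_neg_of_le_neg (iInf_le _ i))

theorem weak_duality_under_solvability
    [IsTopologicalAddGroup X] [ContinuousSMul ℝ X] [LocallyConvexSpace ℝ X] [T2Space X]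
    {T : Type*}
    (f g : X → EReal) (h : T → X → EReal)
    (hf₁ : ∀ x, f x ≠ ⊥) (hf₂ : ∃ x, f x ≠ ⊤) (hfconv : Convex ℝ {p : X × ℝ | f p.1 ≤ (p.2 : EReal)})
    (hg₁ : ∀ x, g x ≠ ⊥) (hg₂ : ∃ x, g x ≠ ⊤) (hgconv : Convex ℝ {p : X × ℝ | g p.1 ≤ (p.2 : EReal)})
    (hh : ∀ t, (∀ x, h t x ≠ ⊥) ∧ (∃ x, h t x ≠ ⊤) ∧ Convex ℝ {p : X × ℝ | h t p.1 ≤ (p.2 : EReal)})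
    -- `g` has a proper e-convex minorant
    (hmin : ∃ m : X → EReal, (∀ x, m x ≤ g x) ∧ (∀ x, m x ≠ ⊥) ∧ (∃ x, m x ≠ ⊤) ∧
      (∀ x, m x = cBiconj m x))
    -- the primal problem over `A = {x | ∀ t, h t x ≤ 0}` is solvable, with a
    -- solution at which `g` is e-convex
    (hsol : ∃ x0 ∈ {x : X | ∀ t, h t x ≤ 0},
      (∀ x ∈ {x : X | ∀ t, h t x ≤ 0}, dcSub f g x0 ≤ dcSub f g x) ∧
      g x0 = cBiconj g x0) :
    (⨅ x ∈ {x : X | ∀ t, h t x ≤ 0}, dcSub f g x) ≥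
      ⨆ lam : {l : T →₀ ℝ // ∀ t, 0 ≤ l t},
        ⨅ w : (X →L[ℝ] ℝ) × (X →L[ℝ] ℝ) × ℝ,
          cConj g w - cConj (fun x => f x + lagSum (lam : T →₀ ℝ) h x) w := by
  obtain ⟨x0, hx0A, hx0min, hx0g⟩ := hsol
  refine iSup_le fun lam => le_iInf₂ fun x hx => le_trans ?_ (hx0min x hx)
  by_cases hFt : f x0 = ⊤
  · rw [dcSub, if_pos hFt]; exact le_top
  obtain ⟨F, hFe⟩ : ∃ r : ℝ, f x0 = (r : EReal) :=
    ⟨(f x0).toReal, (EReal.coe_toReal hFt (hf₁ x0)).symm⟩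
  set φ : X → EReal := fun y => f y + lagSum (lam : T →₀ ℝ) h y with hφdef
  have hl : lagSum (lam : T →₀ ℝ) h x0 ≤ 0 := by
    refine Finset.sum_nonpos fun t _ => ?_
    exact mul_nonpos_of_nonneg_of_nonpos (EReal.coe_nonneg.2 (lam.2 t)) (hx0A t)
  have hφ0 : φ x0 ≤ (F : EReal) := by
    calc φ x0 = f x0 + lagSum (lam : T →₀ ℝ) h x0 := rfl
      _ ≤ f x0 + 0 := add_le_add le_rfl hl
      _ = f x0 := add_zero _
      _ = (F : EReal) := hFe
  have h2 : ∀ w, cpl x0 w + -(F : EReal) ≤ cConj φ w := by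
    intro w
    refine le_trans ?_ (le_iSup (fun y => cpl y w - φ y) x0)
    rw [sub_eq_add_neg]
    exact add_le_add le_rfl (EReal.neg_le_neg_iff.2 hφ0)
  have h3 : ∀ w, cConj g w - cConj φ w ≤ (F:EReal) + -(cpl x0 w - cConj g w) := by
    intro w
    calc cConj g w - cConj φ w ≤ cConj g w - (cpl x0 w + -(F:EReal)) := by
          rw [sub_eq_add_neg, sub_eq_add_neg]
          exact add_le_add le_rfl (EReal.neg_le_neg_iff.2 (h2 w))
      _ = cConj g w - (cpl x0 w - (F:EReal)) := by rw [sub_eq_add_neg (cpl x0 w)]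
      _ ≤ (F:EReal) - (cpl x0 w - cConj g w) := key_ineq F _ _
      _ = (F:EReal) + -(cpl x0 w - cConj g w) := sub_eq_add_neg _ _
  calc (⨅ w, cConj g w - cConj φ w)
      ≤ ⨅ w, ((F:EReal) + -(cpl x0 w - cConj g w)) := iInf_mono h3
    _ ≤ (F:EReal) + ⨅ w, -(cpl x0 w - cConj g w) := helperA F _
    _ ≤ (F:EReal) + -(⨆ w, (cpl x0 w - cConj g w)) := add_le_add le_rfl (helperB _)
    _ = (F:EReal) + -(g x0) := by rw [show (⨆ w, (cpl x0 w - cConj g w)) = cBiconj g x0 from rfl, ← hx0g]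
    _ = dcSub f g x0 := by rw [dcSub, if_neg hFt, hFe, sub_eq_add_neg]

end
end

section
/- For any λ ∈ ℝ^{(T)}_+ and any (u*,v*,γ) ∈ dom g^c, and for all (x*,y*,α) ∈ W: (f − econv g + λh)^c(x*,y*,α) ≥ (f + λh)^c(x* + u*, y* + v*, α + γ) − g^c(u*,v*,γ). Consequently ⋃_{λ ∈ ℝ^{(T)}_+} epi (f − econv g + λh)^c ⊆ K, where K = ⋃_{λ ∈ ℝ^{(T)}_+} ⋂_{(u*,v*,γ) ∈ dom g^c} { epi (f + λh)^c − (u*, v*, γ, g^c(u*,v*,γ)) }. -/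
open scoped Classical

noncomputable section

variable {X : Type*} [AddCommGroup X] [Module ℝ X] [TopologicalSpace X]

/-- The epigraph of the c-conjugate of `φ`, as a subset of `W × ℝ`. -/
def epiC (φ : X → EReal) : Set ((((X →L[ℝ] ℝ) × (X →L[ℝ] ℝ) × ℝ)) × ℝ) :=
  {p | cConj φ p.1 ≤ (p.2 : EReal)}

/-- The set `K`. -/
def Kset {T : Type*} (f g : X → EReal) (h : T → X → EReal) :
    Set ((((X →L[ℝ] ℝ) × (X →L[ℝ] ℝ) × ℝ)) × ℝ) :=
  ⋃ lam : {l : T →₀ ℝ // ∀ t, 0 ≤ l t},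
    ⋂ w ∈ {w : (X →L[ℝ] ℝ) × (X →L[ℝ] ℝ) × ℝ | cConj g w ≠ ⊤},
      (fun p => p - (w, (cConj g w).toReal)) ''
        epiC (fun x => f x + lagSum (lam : T →₀ ℝ) h x)

/-! ### Auxiliary lemmas -/

lemma cpl_ne_bot (x : X) (w : (X →L[ℝ] ℝ) × (X →L[ℝ] ℝ) × ℝ) : cpl x w ≠ ⊥ := by
  unfold cpl; split <;> simp

lemma cpl_cases (x : X) (w : (X →L[ℝ] ℝ) × (X →L[ℝ] ℝ) × ℝ) :
    (∃ r : ℝ, cpl x w = (r : EReal)) ∨ cpl x w = ⊤ := by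
  unfold cpl; split
  · exact Or.inl ⟨_, rfl⟩
  · exact Or.inr rfl

lemma cpl_add_le (x : X) (z w : (X →L[ℝ] ℝ) × (X →L[ℝ] ℝ) × ℝ) :
    cpl x (z + w) ≤ cpl x z + cpl x w := by
  by_cases hz : (z.2.1 x : ℝ) < z.2.2
  · by_cases hw : (w.2.1 x : ℝ) < w.2.2
    · have hcond : ((z + w).2.1 x : ℝ) < (z + w).2.2 := by
        simp only [Prod.snd_add, Prod.fst_add, ContinuousLinearMap.add_apply]
        exact add_lt_add hz hw
      unfold cpl
      rw [if_pos hcond, if_pos hz, if_pos hw]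
      simp only [Prod.fst_add, ContinuousLinearMap.add_apply, EReal.coe_add, le_refl]
    · have : cpl x w = ⊤ := by unfold cpl; rw [if_neg hw]
      rw [this, EReal.add_top_of_ne_bot (cpl_ne_bot x z)]
      exact le_top
  · have : cpl x z = ⊤ := by unfold cpl; rw [if_neg hz]
    rw [this, EReal.top_add_of_ne_bot (cpl_ne_bot x w)]
    exact le_top

lemma ereal_coe_mul_ne_bot {c : ℝ} (hc : 0 ≤ c) {y : EReal} (hy : y ≠ ⊥) :
    (c : EReal) * y ≠ ⊥ := by
  rcases eq_or_lt_of_le hc with hc0 | hc0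
  · rw [← hc0]; simp
  · induction y using EReal.rec with
    | bot => exact absurd rfl hy
    | coe r => exact_mod_cast EReal.coe_ne_bot (c * r)
    | top => rw [EReal.coe_mul_top_of_pos hc0]; simp

lemma lagSum_ne_bot {T : Type*} (lam : T →₀ ℝ) (hlam : ∀ t, 0 ≤ lam t)
    (h : T → X → EReal) (hh : ∀ t x, h t x ≠ ⊥) (x : X) : lagSum lam h x ≠ ⊥ := by
  unfold lagSum
  refine Finset.sum_induction _ (· ≠ ⊥) (fun a b ha hb hab => ?_) (by simp)
    (fun t _ => ereal_coe_mul_ne_bot (hlam t) (hh t x))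
  rcases EReal.add_eq_bot_iff.mp hab with h' | h' <;> [exact ha h'; exact hb h']

lemma cConj_ne_bot (φ : X → EReal) (h1 : ∀ x, φ x ≠ ⊥) {x₀ : X} (h2 : φ x₀ ≠ ⊤)
    (w : (X →L[ℝ] ℝ) × (X →L[ℝ] ℝ) × ℝ) : cConj φ w ≠ ⊥ := by
  intro hc
  have hle : cpl x₀ w - φ x₀ ≤ cConj φ w := le_iSup (fun x => cpl x w - φ x) x₀
  rw [hc, le_bot_iff] at hle
  have : cpl x₀ w - φ x₀ ≠ ⊥ := by
    rw [sub_eq_add_neg]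
    intro hb
    rcases EReal.add_eq_bot_iff.mp hb with h' | h'
    · exact cpl_ne_bot x₀ w h'
    · exact h2 (EReal.neg_eq_bot_iff.mp h')
  exact this hle

/-- The pointwise key inequality. -/
lemma pointwise_key {T : Type*}
    (f g : X → EReal) (h : T → X → EReal)
    (hf₁ : ∀ x, f x ≠ ⊥)
    (hg₁ : ∀ x, g x ≠ ⊥) (hg₂ : ∃ x, g x ≠ ⊤)
    (hh : ∀ t x, h t x ≠ ⊥)
    (lam : T →₀ ℝ) (hlam : ∀ t, 0 ≤ lam t)
    {w : (X →L[ℝ] ℝ) × (X →L[ℝ] ℝ) × ℝ} (hw : cConj g w ≠ ⊤)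
    (z : (X →L[ℝ] ℝ) × (X →L[ℝ] ℝ) × ℝ) (x : X) :
    cpl x (z + w) - (f x + lagSum lam h x) - cConj g w ≤
      cpl x z - (dcSub f (cBiconj g) x + lagSum lam h x) := by
  obtain ⟨x₀, hx₀⟩ := hg₂
  have hgb : cConj g w ≠ ⊥ := cConj_ne_bot g hg₁ hx₀ w
  obtain ⟨r, hr⟩ : ∃ r : ℝ, cConj g w = (r : EReal) := ⟨_, (EReal.coe_toReal hw hgb).symm⟩
  have hL : lagSum lam h x ≠ ⊥ := lagSum_ne_bot lam hlam h hh x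
  by_cases hfx : f x = ⊤
  · -- both sides are ⊥
    have hltop : f x + lagSum lam h x = ⊤ := by
      rw [hfx]; exact EReal.top_add_of_ne_bot hL
    have hds : dcSub f (cBiconj g) x = ⊤ := by unfold dcSub; rw [if_pos hfx]
    have hdtop : dcSub f (cBiconj g) x + lagSum lam h x = ⊤ := by
      rw [hds]; exact EReal.top_add_of_ne_bot hL
    rw [hltop, hdtop]
    have h1 : cpl x (z + w) - (⊤ : EReal) = ⊥ := by
      rw [sub_eq_add_neg, EReal.neg_top, EReal.add_bot]
    rw [h1, sub_eq_add_neg, EReal.bot_add]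
    exact bot_le
  · obtain ⟨a, ha⟩ : ∃ a : ℝ, f x = (a : EReal) := ⟨_, (EReal.coe_toReal hfx (hf₁ x)).symm⟩
    set B := cBiconj g x with hB
    have hBlow : cpl x w - cConj g w ≤ B := le_iSup (fun w => cpl x w - cConj g w) w
    have hBbot : B ≠ ⊥ := by
      intro hb
      rw [hb, le_bot_iff, hr, sub_eq_add_neg] at hBlow
      rcases EReal.add_eq_bot_iff.mp hBlow with h' | h'
      · exact cpl_ne_bot x w h'
      · exact EReal.coe_ne_top r (EReal.neg_eq_bot_iff.mp h')
    have hds : dcSub f (cBiconj g) x = f x - B := by unfold dcSub; rw [if_neg hfx]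
    by_cases hBtop : B = ⊤
    · -- RHS is ⊤
      have : dcSub f (cBiconj g) x + lagSum lam h x = ⊥ := by
        rw [hds, hBtop, sub_eq_add_neg, EReal.neg_top, EReal.add_bot, EReal.bot_add]
      rw [this]
      rw [show cpl x z - (⊥ : EReal) = ⊤ by
        rw [sub_eq_add_neg, EReal.neg_bot, EReal.add_top_of_ne_bot (cpl_ne_bot x z)]]
      exact le_top
    · obtain ⟨b, hb⟩ : ∃ b : ℝ, B = (b : EReal) := ⟨_, (EReal.coe_toReal hBtop hBbot).symm⟩
      have hcw : cpl x w ≤ (b : EReal) + (r : EReal) := by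
        have := hBlow
        rw [hr, hb] at this
        calc cpl x w = cpl x w - (r : EReal) + (r : EReal) := by
              rcases cpl_cases x w with ⟨s, hs⟩ | hs
              · rw [hs]; norm_cast; ring
              · rw [hs]
                rw [show (⊤ : EReal) - (r : EReal) = ⊤ by
                  rw [sub_eq_add_neg, ← EReal.coe_neg, EReal.top_add_of_ne_bot (EReal.coe_ne_bot _)]]
                rw [EReal.top_add_of_ne_bot (EReal.coe_ne_bot _)]
          _ ≤ (b : EReal) + (r : EReal) := add_le_add_left this _
      by_cases hLt : lagSum lam h x = ⊤
      · -- LHS is ⊥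
        have : f x + lagSum lam h x = ⊤ := by
          rw [hLt]; exact EReal.add_top_of_ne_bot (hf₁ x)
        rw [this]
        rw [show cpl x (z + w) - (⊤ : EReal) = ⊥ by
          rw [sub_eq_add_neg, EReal.neg_top, EReal.add_bot]]
        rw [sub_eq_add_neg, EReal.bot_add]
        exact bot_le
      · obtain ⟨l, hl⟩ : ∃ l : ℝ, lagSum lam h x = (l : EReal) :=
          ⟨_, (EReal.coe_toReal hLt hL).symm⟩
        rw [ha, hl, hr, hds, ha, hb]
        have hchain : cpl x (z + w) ≤ cpl x z + ((b : EReal) + (r : EReal)) :=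
          (cpl_add_le x z w).trans (add_le_add_right hcw _)
        calc cpl x (z + w) - ((a : EReal) + (l : EReal)) - (r : EReal)
            ≤ (cpl x z + ((b : EReal) + (r : EReal))) - ((a : EReal) + (l : EReal)) - (r : EReal) :=
              EReal.sub_le_sub (EReal.sub_le_sub hchain le_rfl) le_rfl
          _ = cpl x z - ((a : EReal) - (b : EReal) + (l : EReal)) := by
              rcases cpl_cases x z with ⟨s, hs⟩ | hs
              · rw [hs]; norm_cast; ring
              · rw [hs]
                have htop : ∀ q : ℝ, (⊤ : EReal) - (q : EReal) = ⊤ := fun q => by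
                  rw [sub_eq_add_neg, ← EReal.coe_neg,
                    EReal.top_add_of_ne_bot (EReal.coe_ne_bot _)]
                rw [EReal.top_add_of_ne_bot
                  (show ((b : EReal) + (r : EReal)) ≠ ⊥ by
                    exact_mod_cast EReal.coe_ne_bot (b + r))]
                rw [show ((a : EReal) + (l : EReal)) = ((a + l : ℝ) : EReal) by norm_cast,
                  show ((a : EReal) - (b : EReal) + (l : EReal)) = ((a - b + l : ℝ) : EReal) by
                    norm_cast,
                  htop, htop, htop]

theorem key_inequality_and_K_inclusion
    [IsTopologicalAddGroup X] [ContinuousSMul ℝ X] [LocallyConvexSpace ℝ X] [T2Space X]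
    {T : Type*}
    (f g : X → EReal) (h : T → X → EReal)
    (hf₁ : ∀ x, f x ≠ ⊥) (hf₂ : ∃ x, f x ≠ ⊤)
    (hfconv : Convex ℝ {p : X × ℝ | f p.1 ≤ (p.2 : EReal)})
    (hg₁ : ∀ x, g x ≠ ⊥) (hg₂ : ∃ x, g x ≠ ⊤)
    (hgconv : Convex ℝ {p : X × ℝ | g p.1 ≤ (p.2 : EReal)})
    (hh : ∀ t, (∀ x, h t x ≠ ⊥) ∧ (∃ x, h t x ≠ ⊤) ∧
      Convex ℝ {p : X × ℝ | h t p.1 ≤ (p.2 : EReal)})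
    (hmin : ∃ m : X → EReal, (∀ x, m x ≤ g x) ∧ (∀ x, m x ≠ ⊥) ∧ (∃ x, m x ≠ ⊤) ∧
      (∀ x, m x = cBiconj m x)) :
    (∀ lam : T →₀ ℝ, (∀ t, 0 ≤ lam t) →
      ∀ w ∈ {w : (X →L[ℝ] ℝ) × (X →L[ℝ] ℝ) × ℝ | cConj g w ≠ ⊤},
      ∀ z : (X →L[ℝ] ℝ) × (X →L[ℝ] ℝ) × ℝ,
        cConj (fun x => dcSub f (cBiconj g) x + lagSum lam h x) z ≥
          cConj (fun x => f x + lagSum lam h x) (z + w) - cConj g w) ∧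
    (⋃ lam : {l : T →₀ ℝ // ∀ t, 0 ≤ l t},
        epiC (fun x => dcSub f (cBiconj g) x + lagSum (lam : T →₀ ℝ) h x)) ⊆
      Kset f g h := by
  obtain ⟨x₀, hx₀⟩ := hg₂
  have hh₁ : ∀ t x, h t x ≠ ⊥ := fun t x => (hh t).1 x
  have key : ∀ lam : T →₀ ℝ, (∀ t, 0 ≤ lam t) →
      ∀ w ∈ {w : (X →L[ℝ] ℝ) × (X →L[ℝ] ℝ) × ℝ | cConj g w ≠ ⊤},
      ∀ z : (X →L[ℝ] ℝ) × (X →L[ℝ] ℝ) × ℝ,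
        cConj (fun x => dcSub f (cBiconj g) x + lagSum lam h x) z ≥
          cConj (fun x => f x + lagSum lam h x) (z + w) - cConj g w := by
    intro lam hlam w hw z
    have hgb : cConj g w ≠ ⊥ := cConj_ne_bot g hg₁ hx₀ w
    obtain ⟨r, hr⟩ : ∃ r : ℝ, cConj g w = (r : EReal) := ⟨_, (EReal.coe_toReal hw hgb).symm⟩
    rw [ge_iff_le, hr, EReal.sub_le_iff_le_add (Or.inl (EReal.coe_ne_bot r))
      (Or.inl (EReal.coe_ne_top r))]
    refine iSup_le fun x => ?_
    have hpt := pointwise_key f g h hf₁ hg₁ ⟨x₀, hx₀⟩ hh₁ lam hlam hw z x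
    rw [hr] at hpt
    have hle : cpl x (z + w) - (f x + lagSum lam h x) - (r : EReal) ≤
        cConj (fun x => dcSub f (cBiconj g) x + lagSum lam h x) z :=
      hpt.trans (le_iSup (fun x => cpl x z - (dcSub f (cBiconj g) x + lagSum lam h x)) x)
    rw [EReal.sub_le_iff_le_add (Or.inl (EReal.coe_ne_bot r))
      (Or.inl (EReal.coe_ne_top r))] at hle
    exact hle
  refine ⟨key, ?_⟩
  intro p hp
  rw [Set.mem_iUnion] at hp
  obtain ⟨lam, hp⟩ := hp
  rw [Kset, Set.mem_iUnion]
  refine ⟨lam, ?_⟩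
  rw [Set.mem_iInter₂]
  intro w hw
  have hgb : cConj g w ≠ ⊥ := cConj_ne_bot g hg₁ hx₀ w
  obtain ⟨r, hr⟩ : ∃ r : ℝ, cConj g w = (r : EReal) := ⟨_, (EReal.coe_toReal hw hgb).symm⟩
  refine ⟨p + (w, (cConj g w).toReal), ?_, by simp⟩
  have hkey := key lam lam.2 w hw p.1
  rw [ge_iff_le, hr, EReal.sub_le_iff_le_add (Or.inl (EReal.coe_ne_bot r))
    (Or.inl (EReal.coe_ne_top r))] at hkey
  have h2 : cConj (fun x => f x + lagSum (lam : T →₀ ℝ) h x) (p.1 + w) ≤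
      (p.2 : EReal) + (r : EReal) := hkey.trans (add_le_add_left hp _)
  show cConj _ (p + (w, (cConj g w).toReal)).1 ≤
    (((p + (w, (cConj g w).toReal)).2 : ℝ) : EReal)
  simp only [Prod.fst_add, Prod.snd_add]
  rw [EReal.coe_add]
  have hcoe : ((cConj g w).toReal : EReal) = (r : EReal) := by rw [hr]; simp
  rw [hcoe]
  exact h2

end
end
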